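/- Let X₁, …, Xₙ be independent nonnegative random variables where X_i = (Y_i/k)^{1/β} with Y_i ~ Gamma(γ_i/β, 1), k > 0, β ≥ 1, γ_i > 0. With γ₀ = γ₁ + ⋯ + γₙ, for all x > 0: Γ(γ₀/β, k x^β)/Γ(γ₀/β) ≤ P(X₁ + ⋯ + Xₙ > x) ≤ Γ(γ₀/β, k x^β/n^{β-1})/Γ(γ₀/β). -/

import Mathlib

/-!
The map `y ↦ k y^β` carries the law of each `X i` to `Gamma(γ i / β, 1)`, so by independence
`T = ∑ k (X i)^β` is `Gamma(γ₀ / β, 1)`, and `P(T > c) = Γ(γ₀/β, c) / Γ(γ₀/β)`.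
For nonnegative `v i` and `β ≥ 1`, `∑ (v i)^β ≤ (∑ v i)^β ≤ n^(β-1) ∑ (v i)^β`, hence almost surely
`{T > k x^β} ⊆ {∑ X i > x} ⊆ {T > k x^β / n^(β-1)}`.
-/

open Real MeasureTheory ProbabilityTheory

/-- The upper incomplete gamma function Γ(α, x) = ∫_x^∞ t^(α-1) e^{-t} dt. -/
noncomputable def upperGamma (a x : ℝ) : ℝ :=
  ∫ t in Set.Ioi x, t ^ (a - 1) * Real.exp (-t)

/-- The law on ℝ with density β k^(γ/β) x^(γ-1) e^{-k x^β} / Γ(γ/β) on (0, ∞):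
the law of (Y/k)^(1/β) where Y ~ Gamma(γ/β, 1). -/
noncomputable def weibullLikeLaw (k β γ : ℝ) : Measure ℝ :=
  volume.withDensity fun x =>
    ENNReal.ofReal
      (if 0 < x then β * k ^ (γ / β) * x ^ (γ - 1) * Real.exp (-(k * x ^ β)) / Real.Gamma (γ / β)
       else 0)

open Set
open scoped ENNReal

namespace ProbabilityTheory

lemma gammaPDFReal_mul_gammaPDFReal_sub {a b r z t : ℝ} (hab : 0 < a + b) (hr : 0 < r)
    (hz : 0 < z) (ht : t ∈ Ioo 0 1) :
    z * (gammaPDFReal a r (z * t) * gammaPDFReal b r (z - z * t))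
      = gammaPDFReal (a + b) r z * (1 / beta a b * t ^ (a - 1) * (1 - t) ^ (b - 1)) := by
  obtain ⟨ht0, ht1⟩ := ht
  have hexp : rexp (-(r * (z * t))) * rexp (-(r * (z * (1 - t)))) = rexp (-(r * z)) := by
    rw [← Real.exp_add]; ring_nf
  rw [show z - z * t = z * (1 - t) by ring]
  simp only [gammaPDFReal, beta, if_pos hz.le, if_pos (mul_pos hz ht0).le,
    if_pos (mul_pos hz (sub_pos.2 ht1)).le]
  rw [Real.mul_rpow hz.le ht0.le, Real.mul_rpow hz.le (sub_pos.2 ht1).le,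
    show a + b - 1 = (a - 1) + (b - 1) + 1 by ring, Real.rpow_add hz, Real.rpow_add hz,
    Real.rpow_one, Real.rpow_add hr, ← hexp]
  have hΓ := (Real.Gamma_pos_of_pos hab).ne'
  field_simp

lemma lconvolution_gammaPDF_of_pos {a b r z : ℝ} (ha : 0 < a) (hb : 0 < b) (hr : 0 < r)
    (hz : 0 < z) : (gammaPDF a r ⋆ₗ gammaPDF b r) z = gammaPDF (a + b) r z := by
  set g : ℝ → ℝ≥0∞ := fun y => gammaPDF a r y * gammaPDF b r (z - y)
  have hsupp : g.support ⊆ Icc 0 z := by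
    intro y hy
    by_contra hyz
    rcases not_and_or.1 hyz with hy0 | hyz
    · exact hy (by simp [g, gammaPDF_of_neg (not_le.1 hy0)])
    · exact hy (by simp [g, gammaPDF_of_neg (sub_neg.2 (not_le.1 hyz))])
  have himage : (fun t => z * t) '' Ioo 0 1 = Ioo 0 z := by
    simpa using image_mul_left_Ioo hz (0 : ℝ) 1
  calc (gammaPDF a r ⋆ₗ gammaPDF b r) z = ∫⁻ y, g y := by
        simp only [lconvolution_def, neg_add_eq_sub, g]
    _ = ∫⁻ y in Ioo 0 z, g y := by
        rw [setLIntegral_congr Ioo_ae_eq_Icc, setLIntegral_eq_of_support_subset hsupp]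
    -- substituting `y = z t` turns the convolution into a beta integral
    _ = ∫⁻ t in Ioo 0 1, ENNReal.ofReal z * g (z * t) := by
        rw [← himage, lintegral_image_eq_lintegral_deriv_mul_of_monotoneOn measurableSet_Ioo
          (fun t _ => by simpa using ((hasDerivAt_id t).const_mul z).hasDerivWithinAt)
          (fun _ _ _ _ h => mul_le_mul_of_nonneg_left h hz.le)]
    _ = ∫⁻ t in Ioo 0 1, gammaPDF (a + b) r z *
          ENNReal.ofReal (1 / beta a b * t ^ (a - 1) * (1 - t) ^ (b - 1)) := by
        refine setLIntegral_congr_fun measurableSet_Ioo fun t ht => ?_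
        simp only [g, gammaPDF, ← ENNReal.ofReal_mul hz.le, ← ENNReal.ofReal_mul
          (gammaPDFReal_nonneg ha hr _),
          gammaPDFReal_mul_gammaPDFReal_sub (add_pos ha hb) hr hz ht]
        rw [ENNReal.ofReal_mul (gammaPDFReal_nonneg (add_pos ha hb) hr _)]
    _ = gammaPDF (a + b) r z := by
        rw [lintegral_const_mul' (gammaPDF (a + b) r z) _ ENNReal.ofReal_ne_top,
          ← lintegral_betaPDF, lintegral_betaPDF_eq_one ha hb, mul_one]

lemma gammaMeasure_conv_gammaMeasure {a b r : ℝ} (ha : 0 < a) (hb : 0 < b) (hr : 0 < r) :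
    gammaMeasure a r ∗ gammaMeasure b r = gammaMeasure (a + b) r := by
  rw [gammaMeasure, gammaMeasure, gammaMeasure,
    conv_withDensity_eq_lconvolution (f := gammaPDF a r) (g := gammaPDF b r)
      (measurable_gammaPDFReal a r).ennreal_ofReal (measurable_gammaPDFReal b r).ennreal_ofReal]
  refine withDensity_congr_ae ?_
  filter_upwards [compl_mem_ae_iff.2 (measure_singleton (0 : ℝ))] with z hz
  rcases lt_or_gt_of_ne hz with hneg | hpos
  · rw [gammaPDF_of_neg hneg, lconvolution_def]
    refine (lintegral_congr (g := fun _ => 0) fun y => ?_).trans lintegral_zero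
    rcases lt_or_ge y 0 with hy | hy
    · rw [gammaPDF_of_neg hy, zero_mul]
    · rw [gammaPDF_of_neg (by linarith : -y + z < 0), mul_zero]
  · exact lconvolution_gammaPDF_of_pos ha hb hr hpos

lemma iIndepFun.map_sum_eq_gammaMeasure {Ω ι : Type*} [MeasurableSpace Ω] {μ : Measure Ω}
    [IsFiniteMeasure μ] {Y : ι → Ω → ℝ} {a : ι → ℝ} {r : ℝ} (hY : ∀ i, Measurable (Y i))
    (hindep : iIndepFun Y μ) (ha : ∀ i, 0 < a i) (hr : 0 < r)
    (hlaw : ∀ i, μ.map (Y i) = gammaMeasure (a i) r) {s : Finset ι} (hs : s.Nonempty) :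
    μ.map (∑ i ∈ s, Y i) = gammaMeasure (∑ i ∈ s, a i) r := by
  induction hs using Finset.Nonempty.cons_induction with
  | singleton i => simpa using hlaw i
  | cons i s hi hs ih =>
    rw [Finset.sum_cons, Finset.sum_cons, add_comm (Y i),
      (hindep.indepFun_finsetSum_of_notMem hY hi).map_add_eq_map_conv_map
        (by fun_prop) (hY i),
      ih, hlaw i, add_comm (a i),
      gammaMeasure_conv_gammaMeasure (Finset.sum_pos (fun j _ => ha j) hs) (ha i) hr]

lemma gammaMeasure_eq_withDensity_restrict_Ioi (a r : ℝ) :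
    gammaMeasure a r = (volume.restrict (Ioi 0)).withDensity (gammaPDF a r) := by
  rw [gammaMeasure, ← withDensity_indicator measurableSet_Ioi]
  refine withDensity_congr_ae ?_
  filter_upwards [compl_mem_ae_iff.2 (measure_singleton (0 : ℝ))] with z hz
  rcases lt_or_gt_of_ne hz with hneg | hpos
  · simp [hneg.le, gammaPDF_of_neg hneg]
  · simp [hpos]

lemma gammaMeasure_Ioi_toReal {a c : ℝ} (ha : 0 < a) (hc : 0 ≤ c) :
    (gammaMeasure a 1 (Ioi c)).toReal = upperGamma a c / Real.Gamma a := by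
  rw [gammaMeasure, withDensity_apply _ measurableSet_Ioi]
  simp only [gammaPDF]
  rw [← integral_eq_lintegral_of_nonneg_ae (ae_of_all _ (gammaPDFReal_nonneg ha one_pos))
    (by fun_prop), upperGamma, div_eq_inv_mul, ← integral_const_mul]
  refine setIntegral_congr_fun measurableSet_Ioi fun t ht => ?_
  simp only [gammaPDFReal, if_pos (hc.trans (le_of_lt ht)), Real.one_rpow, one_mul]
  ring

end ProbabilityTheory

lemma Finset.sum_rpow_le_rpow_sum {ι : Type*} (s : Finset ι) {f : ι → ℝ}
    (hf : ∀ i ∈ s, 0 ≤ f i) {p : ℝ} (hp : 1 ≤ p) : ∑ i ∈ s, f i ^ p ≤ (∑ i ∈ s, f i) ^ p := by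
  have hS : 0 ≤ ∑ i ∈ s, f i := sum_nonneg hf
  have hp' : 1 + (p - 1) ≠ 0 := by linarith
  calc ∑ i ∈ s, f i ^ p = ∑ i ∈ s, f i * f i ^ (p - 1) := sum_congr rfl fun i hi => by
        rw [← Real.rpow_one_add' (hf i hi) hp', add_sub_cancel]
    _ ≤ ∑ i ∈ s, f i * (∑ j ∈ s, f j) ^ (p - 1) := sum_le_sum fun i hi =>
        mul_le_mul_of_nonneg_left
          (Real.rpow_le_rpow (hf i hi) (single_le_sum hf hi) (by linarith)) (hf i hi)
    _ = (∑ i ∈ s, f i) ^ p := by rw [← sum_mul, ← Real.rpow_one_add' hS hp', add_sub_cancel]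

lemma Finset.lt_sum_of_rpow_lt_sum_rpow {ι : Type*} {s : Finset ι} {f : ι → ℝ}
    (hf : ∀ i ∈ s, 0 ≤ f i) {x p : ℝ} (hx : 0 ≤ x) (hp : 1 ≤ p)
    (h : x ^ p < ∑ i ∈ s, f i ^ p) : x < ∑ i ∈ s, f i :=
  (Real.rpow_lt_rpow_iff hx (sum_nonneg hf) (by linarith)).1
    (h.trans_le (sum_rpow_le_rpow_sum s hf hp))

lemma Finset.rpow_div_card_lt_sum_rpow {ι : Type*} {s : Finset ι} {f : ι → ℝ}
    (hf : ∀ i ∈ s, 0 ≤ f i) {x p : ℝ} (hx : 0 ≤ x) (hp : 1 ≤ p)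
    (h : x < ∑ i ∈ s, f i) : x ^ p / (s.card : ℝ) ^ (p - 1) < ∑ i ∈ s, f i ^ p := by
  have hs : s.Nonempty := nonempty_of_sum_ne_zero (hx.trans_lt h).ne'
  rw [div_lt_iff₀' (Real.rpow_pos_of_pos (by simpa using hs.card_pos) _)]
  calc x ^ p < (∑ i ∈ s, f i) ^ p := Real.rpow_lt_rpow hx h (by linarith)
    _ ≤ (s.card : ℝ) ^ (p - 1) * ∑ i ∈ s, f i ^ p :=
      Real.rpow_sum_le_const_mul_sum_rpow_of_nonneg s hp hf

lemma weibullLikeLaw_eq_withDensity_restrict_Ioi (k β γ : ℝ) :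
    weibullLikeLaw k β γ = (volume.restrict (Ioi 0)).withDensity fun x => ENNReal.ofReal
      (β * k ^ (γ / β) * x ^ (γ - 1) * Real.exp (-(k * x ^ β)) / Real.Gamma (γ / β)) := by
  rw [weibullLikeLaw, ← withDensity_indicator measurableSet_Ioi]
  congr with x
  by_cases hx : 0 < x <;> simp [hx]

lemma ofReal_deriv_mul_gammaPDF_mul_rpow {k β γ x : ℝ} (hk : 0 < k) (hβ : 0 < β) (hx : 0 < x) :
    ENNReal.ofReal (k * (β * x ^ (β - 1))) * gammaPDF (γ / β) 1 (k * x ^ β)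
      = ENNReal.ofReal
          (β * k ^ (γ / β) * x ^ (γ - 1) * Real.exp (-(k * x ^ β)) / Real.Gamma (γ / β)) := by
  have hxβ : 0 < x ^ β := Real.rpow_pos_of_pos hx β
  rw [gammaPDF_of_nonneg (mul_pos hk hxβ).le, ← ENNReal.ofReal_mul (by positivity)]
  congr 1
  rw [Real.mul_rpow hk.le hxβ.le, ← Real.rpow_mul hx.le, Real.rpow_sub_one hk.ne',
    show γ - 1 = (β - 1) + β * (γ / β - 1) by field_simp; ring, Real.rpow_add hx]
  simp only [Real.one_rpow]
  field_simp

lemma map_weibullLikeLaw {k β γ : ℝ} (hk : 0 < k) (hβ : 0 < β) :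
    (weibullLikeLaw k β γ).map (fun x => k * x ^ β) = gammaMeasure (γ / β) 1 := by
  set φ : ℝ → ℝ := fun x => k * x ^ β
  have hφ : Measurable φ := by fun_prop
  have hmono : StrictMonoOn φ (Ioi 0) := fun x hx y _ hxy =>
    mul_lt_mul_of_pos_left (Real.rpow_lt_rpow (le_of_lt hx) hxy hβ) hk
  have hrange : φ '' Ioi 0 = Ioi 0 := by
    refine Subset.antisymm (image_subset_iff.2 fun x hx => mul_pos hk (Real.rpow_pos_of_pos hx β))
      fun u hu => ⟨(u / k) ^ β⁻¹, Real.rpow_pos_of_pos (div_pos hu hk) _, ?_⟩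
    simp only [φ]
    rw [Real.rpow_inv_rpow (div_pos hu hk).le hβ.ne', mul_div_cancel₀ _ hk.ne']
  ext s hs
  have himage : φ '' (φ ⁻¹' s ∩ Ioi 0) = s ∩ Ioi 0 := by rw [image_preimage_inter, hrange]
  have hpre : MeasurableSet (φ ⁻¹' s ∩ Ioi 0) := (hφ hs).inter measurableSet_Ioi
  rw [Measure.map_apply hφ hs, weibullLikeLaw_eq_withDensity_restrict_Ioi,
    gammaMeasure_eq_withDensity_restrict_Ioi, withDensity_apply _ (hφ hs), withDensity_apply _ hs,
    Measure.restrict_restrict (hφ hs), Measure.restrict_restrict hs, ← himage,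
    lintegral_image_eq_lintegral_deriv_mul_of_monotoneOn (f := φ) hpre
      (fun x hx =>
        ((Real.hasDerivAt_rpow_const (Or.inl (ne_of_gt hx.2))).const_mul k).hasDerivWithinAt)
      (hmono.monotoneOn.mono inter_subset_right)]
  exact setLIntegral_congr_fun hpre fun x hx => (ofReal_deriv_mul_gammaPDF_mul_rpow hk hβ hx.2).symm

lemma ae_pos_of_map_eq_weibullLikeLaw {Ω : Type*} [MeasurableSpace Ω] {μ : Measure Ω}
    {Y : Ω → ℝ} (hY : Measurable Y) {k β γ : ℝ} (hlaw : μ.map Y = weibullLikeLaw k β γ) :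
    ∀ᵐ ω ∂μ, 0 < Y ω := by
  refine ae_of_ae_map hY.aemeasurable ?_
  rw [hlaw, weibullLikeLaw_eq_withDensity_restrict_Ioi]
  exact (withDensity_absolutelyContinuous _ _).ae_le (ae_restrict_mem measurableSet_Ioi)

lemma toReal_measure_lt_sum_mul_rpow {Ω ι : Type*} [MeasurableSpace Ω] {μ : Measure Ω}
    [IsFiniteMeasure μ] [Fintype ι] [Nonempty ι] {k β c : ℝ} {γ : ι → ℝ} {X : ι → Ω → ℝ}
    (hk : 0 < k) (hβ : 0 < β) (hγ : ∀ i, 0 < γ i) (hX : ∀ i, Measurable (X i))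
    (hindep : iIndepFun X μ) (hlaw : ∀ i, μ.map (X i) = weibullLikeLaw k β (γ i)) (hc : 0 ≤ c) :
    (μ {ω | c < ∑ i, k * X i ω ^ β}).toReal
      = upperGamma ((∑ i, γ i) / β) c / Real.Gamma ((∑ i, γ i) / β) := by
  have hshape : 0 < (∑ i, γ i) / β :=
    div_pos (Finset.sum_pos (fun i _ => hγ i) Finset.univ_nonempty) hβ
  have hlaw_sum : μ.map (∑ i, fun ω => k * X i ω ^ β) = gammaMeasure ((∑ i, γ i) / β) 1 := by
    rw [Finset.sum_div]
    refine iIndepFun.map_sum_eq_gammaMeasure (fun i => by fun_prop)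
      (hindep.comp (fun _ y => k * y ^ β) fun _ => by fun_prop) (fun i => div_pos (hγ i) hβ)
      one_pos (fun i => ?_) Finset.univ_nonempty
    rw [← Measure.map_map (by fun_prop) (hX i), hlaw i, map_weibullLikeLaw hk hβ]
  rw [← gammaMeasure_Ioi_toReal hshape hc, ← hlaw_sum,
    Measure.map_apply (by fun_prop) measurableSet_Ioi]
  congr with ω
  simp [Finset.sum_apply]

theorem stmt_7 {Ω : Type*} [MeasureSpace Ω] [IsProbabilityMeasure (ℙ : Measure Ω)]
    (n : ℕ) (hn : 1 ≤ n) (k β : ℝ) (γ : Fin n → ℝ)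
    (hk : 0 < k) (hβ : 1 ≤ β) (hγ : ∀ i, 0 < γ i)
    (X : Fin n → Ω → ℝ) (hmeas : ∀ i, Measurable (X i))
    (hindep : iIndepFun X ℙ)
    (hdist : ∀ i, Measure.map (X i) ℙ = weibullLikeLaw k β (γ i))
    (γ₀ : ℝ) (hγ₀ : γ₀ = ∑ i, γ i)
    (x : ℝ) (hx : 0 < x) :
    upperGamma (γ₀ / β) (k * x ^ β) / Real.Gamma (γ₀ / β)
        ≤ (ℙ {ω | x < ∑ i, X i ω}).toReal ∧
      (ℙ {ω | x < ∑ i, X i ω}).toReal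
        ≤ upperGamma (γ₀ / β) (k * x ^ β / (n : ℝ) ^ (β - 1))
            / Real.Gamma (γ₀ / β) := by
  have hβ0 : 0 < β := by linarith
  have : Nonempty (Fin n) := ⟨⟨0, hn⟩⟩
  have htail : ∀ c, 0 ≤ c → (ℙ {ω | c < ∑ i, k * X i ω ^ β}).toReal
      = upperGamma (γ₀ / β) c / Real.Gamma (γ₀ / β) := fun c hc =>
    hγ₀ ▸ toReal_measure_lt_sum_mul_rpow hk hβ0 hγ hmeas hindep hdist hc
  have hpos : ∀ᵐ ω, ∀ i, 0 < X i ω :=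
    ae_all_iff.2 fun i => ae_pos_of_map_eq_weibullLikeLaw (hmeas i) (hdist i)
  constructor
  · rw [← htail _ (by positivity)]
    refine ENNReal.toReal_mono (measure_ne_top _ _) (measure_mono_ae ?_)
    filter_upwards [hpos] with ω hω (h : k * x ^ β < ∑ i, k * X i ω ^ β)
    rw [← Finset.mul_sum] at h
    exact Finset.lt_sum_of_rpow_lt_sum_rpow (fun i _ => (hω i).le) hx.le hβ
      (lt_of_mul_lt_mul_left h hk.le)
  · rw [← htail _ (by positivity)]
    refine ENNReal.toReal_mono (measure_ne_top _ _) (measure_mono_ae ?_)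
    filter_upwards [hpos] with ω hω (h : x < ∑ i, X i ω)
    have hpow := Finset.rpow_div_card_lt_sum_rpow (fun i _ => (hω i).le) hx.le hβ h
    rw [Finset.card_univ, Fintype.card_fin] at hpow
    show _ < ∑ i, k * X i ω ^ β
    rw [← Finset.mul_sum, mul_div_assoc]
    exact mul_lt_mul_of_pos_left hpow hk
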